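/- Let k be an even integer with k ≥ 4, let d = (3k+4)/2, and let C be a symmetric (d,k) circuit code of length 4k+6 whose transition sequence has the form T(C) = (ω₁, x, ω₂, ω₁, x, ω₂), where ω₁ = (1,2,...,k+2) and ω₂ = (β₁,...,β_k). Then β_i > i for i = 1,...,k, and β_j ∉ {j+3, j+4, ..., k+2} for j = 1,...,k−1. -/

import Mathlib

/-- The graph of the `d`-dimensional hypercube: vertices are binary vectors of
length `d`, adjacent iff they differ in exactly one coordinate. -/
def hypercube (d : ℕ) : SimpleGraph (Fin d → Bool) where
  Adj x y := hammingDist x y = 1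
  symm := by
    constructor
    intro x y (h : hammingDist x y = 1)
    show hammingDist y x = 1
    rwa [hammingDist_comm]
  loopless := by
    constructor
    intro x (h : hammingDist x x = 1)
    simp [hammingDist_self] at h

/-- Distance along a cycle of length `N` between positions `i` and `j`. -/
def cycDist {N : ℕ} (i j : ZMod N) : ℕ := min (i - j).val (j - i).val

/-- `x : ZMod N → (Fin d → Bool)` is a `(d,k)` circuit code of length `N`:
a cycle in the hypercube `I(d)` satisfying the spread-`k` distance requirement. -/
structure IsCircuitCode (d k N : ℕ) (x : ZMod N → Fin d → Bool) : Prop where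
  inj : Function.Injective x
  adj : ∀ i : ZMod N, (hypercube d).Adj (x i) (x (i + 1))
  spread : ∀ i j : ZMod N, min (cycDist i j) k ≤ (hypercube d).dist (x i) (x j)

/-- `τ` is the transition sequence of the cycle `x`: `τ i` is the unique
coordinate in which `x i` and `x (i+1)` differ. -/
def IsTransitionSeq {d N : ℕ} (x : ZMod N → Fin d → Bool) (τ : ZMod N → Fin d) : Prop :=
  ∀ (i : ZMod N) (j : Fin d), x (i + 1) j ≠ x i j ↔ j = τ i

/-- The segment of `τ` of length `m` starting at position `start` is a bit run:
all of its entries are distinct. -/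
def IsBitRun {d N : ℕ} (τ : ZMod N → Fin d) (start : ZMod N) (m : ℕ) : Prop :=
  ∀ a b : Fin m, τ (start + ((a : ℕ) : ZMod N)) = τ (start + ((b : ℕ) : ZMod N)) → a = b

/-- `δ(ω)`: the number of coordinates appearing an odd number of times in the
segment of `τ` of length `m` starting at `start`. -/
def segDelta {d N : ℕ} (τ : ZMod N → Fin d) (start : ZMod N) (m : ℕ) : ℕ :=
  (Finset.univ.filter fun c : Fin d =>
    Odd (Finset.univ.filter fun t : Fin m => τ (start + ((t : ℕ) : ZMod N)) = c).card).card

/-!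
Within any `k + 1` consecutive transitions of a `(d, k)` circuit code no coordinate repeats:
if `τ p = τ (p + s)` with `1 ≤ s ≤ k`, then `x p` and `x (p + s + 1)` arise from
`x (p + 1)` and `x (p + s)` by flipping the same coordinate, so they are at Hamming distance
at most `s - 1`, whereas the spread condition forces distance at least `s`.

Both claims are instances of this. In the paper's 1-based numbering, by symmetry the
coordinate `c` of `ω₁` occurs again at position `c + 2k + 3`; if `β_i = c ≤ i`, that
occurrence lies `k + c - i ≤ k` steps after `β_i`. If `j + 3 ≤ β_j = c ≤ k + 2`, the
occurrence of `c` in `ω₁` lies `k + 3 + j - c ≤ k` steps before `β_j`.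
-/

open Function

section Hamming

variable {ι : Type*} [Fintype ι] [DecidableEq ι]

lemma hammingDist_update_add_one {β : ι → Type*} [∀ i, DecidableEq (β i)] {x y : ∀ i, β i}
    {j : ι} (hj : x j ≠ y j) : hammingDist (update x j (y j)) y + 1 = hammingDist x y := by
  have hset : ({i | update x j (y j) i ≠ y i} : Finset ι) =
      ({i | x i ≠ y i} : Finset ι).erase j := by
    ext i
    rcases eq_or_ne i j with rfl | hij <;> simp [*]
  rw [hammingDist, hset, Finset.card_erase_add_one (by simpa using hj), hammingDist]

lemma hammingDist_update_not_left (x y : ι → Bool) (c : ι) :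
    hammingDist (update x c (!x c)) y = hammingDist x (update y c (!y c)) := by
  unfold hammingDist
  congr 1
  ext i
  rcases eq_or_ne i c with rfl | hic
  · simp only [Finset.mem_filter, Finset.mem_univ, true_and, update_self]
    cases x i <;> cases y i <;> decide
  · simp [hic]

end Hamming

section Hypercube

variable {d : ℕ}

lemma hypercube_exists_walk_length_eq_hammingDist (x y : Fin d → Bool) :
    ∃ w : (hypercube d).Walk x y, w.length = hammingDist x y := by
  induction h : hammingDist x y generalizing x with
  | zero =>
    obtain rfl := eq_of_hammingDist_eq_zero h
    exact ⟨.nil, rfl⟩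
  | succ n ih =>
    obtain ⟨j, hj⟩ : ∃ j, x j ≠ y j := ne_iff.mp (hammingDist_ne_zero.mp (by omega))
    have hstep := hammingDist_update_add_one hj
    have hadj : (hypercube d).Adj x (update x j (y j)) := by
      change hammingDist _ _ = 1
      have hx' : x j ≠ update x j (y j) j := by simpa using hj
      simpa using (hammingDist_update_add_one hx').symm
    obtain ⟨w, hw⟩ := ih (update x j (y j)) (by omega)
    exact ⟨.cons hadj w, by simp [hw]⟩

lemma hypercube_dist_le_hammingDist (x y : Fin d → Bool) :
    (hypercube d).dist x y ≤ hammingDist x y := by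
  obtain ⟨w, hw⟩ := hypercube_exists_walk_length_eq_hammingDist x y
  exact hw ▸ SimpleGraph.dist_le w

end Hypercube

lemma cycDist_self_add_natCast {N : ℕ} (p : ZMod N) {m : ℕ} (hm : m < N) :
    cycDist p (p + m) = min m (N - m) := by
  have : NeZero N := ⟨by omega⟩
  rcases Nat.eq_zero_or_pos m with rfl | hm0
  · simp [cycDist]
  have hm_ne : (m : ZMod N) ≠ 0 := by
    rw [Ne, ← ZMod.val_eq_zero, ZMod.val_natCast_of_lt hm]; omega
  rw [cycDist, sub_add_cancel_left, add_sub_cancel_left, ZMod.neg_val, if_neg hm_ne,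
    ZMod.val_natCast_of_lt hm, min_comm]

section CircuitCode

variable {d k N : ℕ} {x : ZMod N → Fin d → Bool} {τ : ZMod N → Fin d}

lemma IsTransitionSeq.apply_add_one (hτ : IsTransitionSeq x τ) (i : ZMod N) :
    x (i + 1) = update (x i) (τ i) (!x i (τ i)) := by
  funext j
  rcases eq_or_ne j (τ i) with rfl | hj
  · simpa using Bool.eq_not.mpr ((hτ i (τ i)).mpr rfl)
  · rw [update_of_ne hj]
    by_contra h
    exact hj ((hτ i j).mp h)

lemma IsCircuitCode.hammingDist_add_natCast_le (hx : IsCircuitCode d k N x) (a : ZMod N) (s : ℕ) :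
    hammingDist (x a) (x (a + s)) ≤ s := by
  induction s with
  | zero => simp
  | succ s ih =>
    calc hammingDist (x a) (x (a + (s + 1 : ℕ)))
        ≤ hammingDist (x a) (x (a + s)) + hammingDist (x (a + s)) (x (a + s + 1)) := by
          rw [Nat.cast_succ, ← add_assoc]
          exact hammingDist_triangle _ _ _
      _ ≤ s + 1 := add_le_add ih (hx.adj _).le

theorem IsCircuitCode.transition_ne (hx : IsCircuitCode d k N x) (hτ : IsTransitionSeq x τ)
    (p : ZMod N) {s : ℕ} (hs : 0 < s) (hsk : s ≤ k) (hsN : 2 * s < N) :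
    τ (p + s) ≠ τ p := by
  intro heq
  have hflip : hammingDist (x p) (x (p + s + 1)) = hammingDist (x (p + 1)) (x (p + s)) := by
    rw [hτ.apply_add_one p, hτ.apply_add_one (p + s), heq, hammingDist_update_not_left]
  have hham : hammingDist (x p) (x (p + s + 1)) ≤ s - 1 := by
    have hps : p + s = p + 1 + ((s - 1 : ℕ) : ZMod N) := by rw [Nat.cast_pred hs]; ring
    rw [hflip, hps]
    exact hx.hammingDist_add_natCast_le (p + 1) (s - 1)
  have hcyc : cycDist p (p + s + 1) = min (s + 1) (N - (s + 1)) := by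
    rw [add_assoc, ← Nat.cast_succ]
    exact cycDist_self_add_natCast p (by omega)
  have hspread := hx.spread p (p + s + 1)
  have := hypercube_dist_le_hammingDist (x p) (x (p + s + 1))
  omega

end CircuitCode

/-- Coordinates are 0-based: the paper's coordinate `c` is `c - 1 : Fin d`, `ω₁` occupies
positions `0, …, k + 1` and `β_i` sits at position `k + 2 + i`. -/
theorem stmt_13_general (k d : ℕ)
    (x : ZMod (4 * k + 6) → Fin d → Bool)
    (hx : IsCircuitCode d k (4 * k + 6) x)
    (τ : ZMod (4 * k + 6) → Fin d) (hτ : IsTransitionSeq x τ)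
    (hsym : ∀ i : ZMod (4 * k + 6), τ (i + ((2 * k + 3 : ℕ) : ZMod (4 * k + 6))) = τ i)
    (hω₁ : ∀ i : ℕ, i ≤ k + 1 → (τ ((i : ℕ) : ZMod (4 * k + 6))).val = i) :
    (∀ i : ℕ, 1 ≤ i → i ≤ k →
        i ≤ (τ ((k + 2 + i : ℕ) : ZMod (4 * k + 6))).val) ∧
    (∀ j : ℕ, 1 ≤ j → j ≤ k - 1 →
        ¬ (j + 2 ≤ (τ ((k + 2 + j : ℕ) : ZMod (4 * k + 6))).val ∧
           (τ ((k + 2 + j : ℕ) : ZMod (4 * k + 6))).val ≤ k + 1)) := by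
  have hne : ∀ p s : ℕ, 0 < s → s ≤ k →
      τ ((p + s : ℕ) : ZMod (4 * k + 6)) ≠ τ (p : ZMod (4 * k + 6)) := fun p s hs hsk => by
    rw [Nat.cast_add]
    exact hx.transition_ne hτ _ hs hsk (by omega)
  refine ⟨fun i hi hik => ?_, fun j hj hjk ⟨hlo, hhi⟩ => ?_⟩
  · by_contra! hlt
    set v := (τ ((k + 2 + i : ℕ) : ZMod (4 * k + 6))).val
    apply hne (k + 2 + i) (k + 1 + v - i) (by omega) (by omega)
    rw [show k + 2 + i + (k + 1 + v - i) = v + (2 * k + 3) by omega, Nat.cast_add, hsym]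
    exact Fin.ext (hω₁ v (by omega))
  · set v := (τ ((k + 2 + j : ℕ) : ZMod (4 * k + 6))).val
    apply hne v (k + 2 + j - v) (by omega) (by omega)
    rw [show v + (k + 2 + j - v) = k + 2 + j by omega]
    exact Fin.ext (hω₁ v (by omega)).symm

/-- For even `k ≥ 4`, `d = (3k+4)/2`, and a symmetric `(d,k)` circuit code of length
`4k+6` whose transition sequence has the form `(ω₁, x, ω₂, ω₁, x, ω₂)` with
`ω₁ = (1,...,k+2)` and `ω₂ = (β₁,...,β_k)` (coordinates modeled 0-based as `Fin d`,
so the paper's coordinate `c` has value `c-1`, and `β_i` sits at position `k+2+i`):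
`β_i > i` for `i = 1,...,k` (0-based: `val ≥ i`), and `β_j ∉ {j+3,...,k+2}` for
`j = 1,...,k-1` (0-based: `val ∉ [j+2, k+1]`). -/
theorem stmt_13 (k d : ℕ) (hk : Even k) (hk4 : 4 ≤ k) (hd : 2 * d = 3 * k + 4)
    (x : ZMod (4 * k + 6) → Fin d → Bool)
    (hx : IsCircuitCode d k (4 * k + 6) x)
    (τ : ZMod (4 * k + 6) → Fin d) (hτ : IsTransitionSeq x τ)
    (hsym : ∀ i : ZMod (4 * k + 6), τ (i + ((2 * k + 3 : ℕ) : ZMod (4 * k + 6))) = τ i)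
    (hω₁ : ∀ i : ℕ, i ≤ k + 1 → (τ ((i : ℕ) : ZMod (4 * k + 6))).val = i) :
    (∀ i : ℕ, 1 ≤ i → i ≤ k →
        i ≤ (τ ((k + 2 + i : ℕ) : ZMod (4 * k + 6))).val) ∧
    (∀ j : ℕ, 1 ≤ j → j ≤ k - 1 →
        ¬ (j + 2 ≤ (τ ((k + 2 + j : ℕ) : ZMod (4 * k + 6))).val ∧
           (τ ((k + 2 + j : ℕ) : ZMod (4 * k + 6))).val ≤ k + 1)) :=
  stmt_13_general k d x hx τ hτ hsym hω₁
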